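/- For every 0 < ε < 1, the 4×4 real symmetric matrix H(ε) = −ε⁴/(8√(1 − ε²)) · M(ε) is negative definite, where M(ε) has entries M₁₁ = M₃₃ = (3 − ε²)/(2 − ε²), M₂₂ = M₄₄ = (3 − 2ε²)/((2 − ε²)(1 − ε²)), M₁₃ = M₃₁ = (1 − ε²)/(2 − ε²), M₂₄ = M₄₂ = 1/((2 − ε²)(1 − ε²)), and all other entries zero. -/
import Mathlib


open Real Matrix

/-- The matrix `M(ε)` from the paper. -/
noncomputable def hessianMatrixM (ε : ℝ) : Matrix (Fin 4) (Fin 4) ℝ :=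
  Matrix.of
    ![![(3 - ε ^ 2) / (2 - ε ^ 2), 0, (1 - ε ^ 2) / (2 - ε ^ 2), 0],
      ![0, (3 - 2 * ε ^ 2) / ((2 - ε ^ 2) * (1 - ε ^ 2)), 0,
        1 / ((2 - ε ^ 2) * (1 - ε ^ 2))],
      ![(1 - ε ^ 2) / (2 - ε ^ 2), 0, (3 - ε ^ 2) / (2 - ε ^ 2), 0],
      ![0, 1 / ((2 - ε ^ 2) * (1 - ε ^ 2)), 0,
        (3 - 2 * ε ^ 2) / ((2 - ε ^ 2) * (1 - ε ^ 2))]]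

/-- The Hessian matrix `H(ε) = -ε⁴/(8√(1-ε²)) · M(ε)`. -/
noncomputable def hessianMatrixH (ε : ℝ) : Matrix (Fin 4) (Fin 4) ℝ :=
  (-ε ^ 4 / (8 * Real.sqrt (1 - ε ^ 2))) • hessianMatrixM ε

/-- For `0 < ε < 1`, the matrix `H(ε)` is negative definite: `xᵀ H(ε) x < 0` for all
nonzero `x ∈ ℝ⁴`. -/
theorem stmt5 (ε : ℝ) (hε0 : 0 < ε) (hε1 : ε < 1) (x : Fin 4 → ℝ) (hx : x ≠ 0) :
    x ⬝ᵥ (hessianMatrixH ε).mulVec x < 0 := by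
  have hq : (0:ℝ) < 1 - ε ^ 2 := by nlinarith
  have hp : (0:ℝ) < 2 - ε ^ 2 := by nlinarith
  have hs : 0 < Real.sqrt (1 - ε ^ 2) := Real.sqrt_pos.mpr hq
  have hsum : 0 < x 0 ^ 2 + x 1 ^ 2 + x 2 ^ 2 + x 3 ^ 2 := by
    have : ∃ i, x i ≠ 0 := by
      by_contra h; push_neg at h; exact hx (funext h)
    obtain ⟨i, hi⟩ := this
    fin_cases i
    · have h0 : x 0 ≠ 0 := hi
      have : 0 < x 0 ^ 2 := by positivity
      nlinarith [sq_nonneg (x 1), sq_nonneg (x 2), sq_nonneg (x 3)]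
    · have h0 : x 1 ≠ 0 := hi
      have : 0 < x 1 ^ 2 := by positivity
      nlinarith [sq_nonneg (x 0), sq_nonneg (x 2), sq_nonneg (x 3)]
    · have h0 : x 2 ≠ 0 := hi
      have : 0 < x 2 ^ 2 := by positivity
      nlinarith [sq_nonneg (x 0), sq_nonneg (x 1), sq_nonneg (x 3)]
    · have h0 : x 3 ≠ 0 := hi
      have : 0 < x 3 ^ 2 := by positivity
      nlinarith [sq_nonneg (x 0), sq_nonneg (x 1), sq_nonneg (x 2)]
  simp only [hessianMatrixH, hessianMatrixM, Matrix.mulVec, dotProduct,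
    Fin.sum_univ_four, Matrix.smul_apply, Matrix.of_apply, Matrix.cons_val', Matrix.cons_val_zero,
    Matrix.cons_val_one, Matrix.head_cons, Matrix.empty_val', Matrix.cons_val_fin_one,
    Matrix.head_fin_const, Matrix.cons_val_two, Matrix.tail_cons, Matrix.cons_val_three,
    smul_eq_mul]
  have key : ∀ y : ℝ, y = -(ε ^ 4 / (8 * Real.sqrt (1 - ε ^ 2) * ((2 - ε ^ 2) * (1 - ε ^ 2)))) *
      ((1 - ε ^ 2) * ((3 - ε ^ 2) * (x 0 ^ 2 + x 2 ^ 2) + 2 * (1 - ε ^ 2) * x 0 * x 2) +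
        (3 - 2 * ε ^ 2) * (x 1 ^ 2 + x 3 ^ 2) + 2 * x 1 * x 3) → y < 0 := by
    intro y hy
    rw [hy]
    apply mul_neg_of_neg_of_pos
    · rw [neg_lt_zero]
      positivity
    · nlinarith [mul_nonneg (mul_nonneg hq.le hq.le) (sq_nonneg (x 0 + x 2)),
        sq_nonneg (x 1 + x 3), mul_pos hq hsum,
        mul_nonneg hq.le (sq_nonneg (x 0)), mul_nonneg hq.le (sq_nonneg (x 2)),
        mul_nonneg hq.le (sq_nonneg (x 1)), mul_nonneg hq.le (sq_nonneg (x 3))]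
  apply key
  field_simp
  ring
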